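/- Exclusivity: in the strict λ-calculus, it is not the case that both Γ₁; Ω₁; (Δ₁, x:C) ⊢ M : A and Γ₂; (Ω₂, x:C); Δ₂ ⊢ M : A are derivable; that is, no term can be typed both with x as a strict hypothesis and with x as an irrelevant hypothesis. -/

import Mathlib

/- A strict λ-calculus with strict (1), irrelevant (0) and unrestricted (u)
   function spaces, in locally nameless representation.  Contexts are finite
   sets of (variable name, type) declarations, split into three zones
   Γ (unrestricted); Ω (irrelevant); Δ (strict). -/

/-- Labels `k ::= 1 | 0 | u`. -/
inductive Lab : Type
  | one
  | zero
  | un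
deriving DecidableEq

/-- Types `A ::= a | A₁ →ᵏ A₂` over atomic types `a` (names in ℕ). -/
inductive Ty : Type
  | atom : ℕ → Ty
  | arr : Ty → Lab → Ty → Ty
deriving DecidableEq

/-- Terms `M ::= c | x | λxᵏ:A.M | M Nᵏ` (locally nameless: bound variables
    are de Bruijn indices, free variables/parameters are names). -/
inductive Tm : Type
  | const : ℕ → Tm
  | bvar : ℕ → Tm
  | fvar : ℕ → Tm
  | lam : Lab → Ty → Tm → Tm
  | app : Tm → Lab → Tm → Tm
deriving DecidableEq

/-- Opening: replace the bound variable `k` by the term `u`. -/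
def Tm.openRec (k : ℕ) (u : Tm) : Tm → Tm
  | .const c => .const c
  | .bvar i => if i = k then u else .bvar i
  | .fvar x => .fvar x
  | .lam l A M => .lam l A (Tm.openRec (k+1) u M)
  | .app M l N => .app (Tm.openRec k u M) l (Tm.openRec k u N)

/-- `M.open0 N` is the body `M` of an abstraction with its bound variable
    replaced by `N`; since free variables are named, this is
    capture-avoiding substitution of the bound variable by construction. -/
def Tm.open0 (M u : Tm) : Tm := Tm.openRec 0 u M

/-- A context zone: a finite set of declarations `x : A`. -/
abbrev Ctx : Type := Finset (ℕ × Ty)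

/-- The variables declared in a context. -/
def Ctx.names (Γ : Ctx) : Finset ℕ := Γ.image Prod.fst

/-- The typing judgment `Γ; Ω; Δ ⊢ M : A` of the strict λ-calculus,
    over a fixed signature `Sg` assigning types to constants
    (a function, so each constant is declared at most once). -/
inductive Typ (Sg : ℕ → Option Ty) : Ctx → Ctx → Ctx → Tm → Ty → Prop
  | con {Γ Ω : Ctx} {c : ℕ} {A : Ty} :
      Sg c = some A → Typ Sg Γ Ω ∅ (.const c) A
  | idu {Γ Ω : Ctx} {x : ℕ} {A : Ty} :
      (x, A) ∈ Γ → Typ Sg Γ Ω ∅ (.fvar x) A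
  | id1 {Γ Ω : Ctx} {x : ℕ} {A : Ty} :
      Typ Sg Γ Ω {(x, A)} (.fvar x) A
  | lamu {Γ Ω Δ : Ctx} {x : ℕ} {A B : Ty} {M : Tm} :
      x ∉ Ctx.names (Γ ∪ Ω ∪ Δ) →
      Typ Sg (insert (x, A) Γ) Ω Δ (Tm.open0 M (.fvar x)) B →
      Typ Sg Γ Ω Δ (.lam .un A M) (.arr A .un B)
  | lam0 {Γ Ω Δ : Ctx} {x : ℕ} {A B : Ty} {M : Tm} :
      x ∉ Ctx.names (Γ ∪ Ω ∪ Δ) →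
      Typ Sg Γ (insert (x, A) Ω) Δ (Tm.open0 M (.fvar x)) B →
      Typ Sg Γ Ω Δ (.lam .zero A M) (.arr A .zero B)
  | lam1 {Γ Ω Δ : Ctx} {x : ℕ} {A B : Ty} {M : Tm} :
      x ∉ Ctx.names (Γ ∪ Ω ∪ Δ) →
      Typ Sg Γ Ω (insert (x, A) Δ) (Tm.open0 M (.fvar x)) B →
      Typ Sg Γ Ω Δ (.lam .one A M) (.arr A .one B)
  | appu {Γ Ω Δ : Ctx} {M N : Tm} {A B : Ty} :
      Typ Sg Γ Ω Δ M (.arr A .un B) →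
      Typ Sg (Γ ∪ Δ) Ω ∅ N A →
      Typ Sg Γ Ω Δ (.app M .un N) B
  | app0 {Γ Ω Δ : Ctx} {M N : Tm} {A B : Ty} :
      Typ Sg Γ Ω Δ M (.arr A .zero B) →
      Typ Sg (Γ ∪ Ω ∪ Δ) ∅ ∅ N A →
      Typ Sg Γ Ω Δ (.app M .zero N) B
  | app1 {Γ Ω ΔM ΔN : Ctx} {M N : Tm} {A B : Ty} :
      Disjoint ΔM ΔN →
      Typ Sg (Γ ∪ ΔN) Ω ΔM M (.arr A .one B) →
      Typ Sg (Γ ∪ ΔM) Ω ΔN N A →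
      Typ Sg Γ Ω (ΔM ∪ ΔN) (.app M .one N) B

/-! Strict variables must occur *strictly* in a term, i.e. somewhere along the spine of
applications that skips the arguments of `0`- and `u`-applications: those arguments are
typed with `Δ` moved out of the strict zone, while a strict application splits `Δ`
between function and argument. An irrelevant variable, on the other hand, becomes usable
only inside arguments of `0`-applications, so if it is declared nowhere else it never
occurs strictly. Hence no variable can be both. -/

namespace Ctx

theorem mem_names_of_mem {Γ : Ctx} {x : ℕ} {A : Ty} (h : (x, A) ∈ Γ) : x ∈ Γ.names :=
  Finset.mem_image_of_mem Prod.fst h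

@[simp]
theorem names_union (Γ Δ : Ctx) : (Γ ∪ Δ).names = Γ.names ∪ Δ.names :=
  Finset.image_union _ _

@[simp]
theorem names_insert (Γ : Ctx) (x : ℕ) (A : Ty) :
    (insert (x, A) Γ).names = insert x Γ.names :=
  Finset.image_insert _ _ _

end Ctx

namespace Tm

def OccursStrictly (x : ℕ) : Tm → Prop
  | .const _ => False
  | .bvar _ => False
  | .fvar y => y = x
  | .lam _ _ M => OccursStrictly x M
  | .app M .one N => OccursStrictly x M ∨ OccursStrictly x N
  | .app M .zero _ => OccursStrictly x M
  | .app M .un _ => OccursStrictly x M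

theorem occursStrictly_openRec_fvar {x y : ℕ} (hxy : x ≠ y) (k : ℕ) (M : Tm) :
    (openRec k (.fvar y) M).OccursStrictly x ↔ M.OccursStrictly x := by
  induction M generalizing k with
  | bvar i =>
    simp only [openRec]
    split <;> simp [OccursStrictly, hxy.symm]
  | app M l N ihM ihN => cases l <;> simp [openRec, OccursStrictly, ihM, ihN]
  | _ => simp [openRec, OccursStrictly, *]

theorem occursStrictly_open0_fvar {x y : ℕ} (hxy : x ≠ y) (M : Tm) :
    (M.open0 (.fvar y)).OccursStrictly x ↔ M.OccursStrictly x :=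
  occursStrictly_openRec_fvar hxy 0 M

end Tm

namespace Typ

variable {Sg : ℕ → Option Ty} {Γ Ω Δ : Ctx} {M : Tm} {A : Ty}

theorem occursStrictly_of_mem_names (h : Typ Sg Γ Ω Δ M A) {x : ℕ} (hx : x ∈ Δ.names) :
    M.OccursStrictly x := by
  induction h with
  | con _ | idu _ => simp [Ctx.names] at hx
  | id1 => simp_all [Ctx.names, Tm.OccursStrictly]
  | @lamu _ _ _ y _ _ M hy _ ih | @lam0 _ _ _ y _ _ M hy _ ih | @lam1 _ _ _ y _ _ M hy _ ih =>
    have hxy : x ≠ y := ne_of_mem_of_not_mem (by simp [hx]) hy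
    exact (Tm.occursStrictly_open0_fvar hxy M).mp (ih (by simp [hx]))
  | appu _ _ ihM | app0 _ _ ihM => exact ihM hx
  | app1 _ _ _ ihM ihN =>
    rw [Ctx.names_union, Finset.mem_union] at hx
    exact hx.imp ihM ihN

theorem not_occursStrictly (h : Typ Sg Γ Ω Δ M A) {x : ℕ} (hΩ : x ∈ Ω.names)
    (hΓ : x ∉ Γ.names) (hΔ : x ∉ Δ.names) : ¬ M.OccursStrictly x := by
  induction h with
  | con _ => exact id
  | @idu _ _ y _ hy =>
    rintro rfl
    exact hΓ (Ctx.mem_names_of_mem hy)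
  | id1 =>
    rintro rfl
    simp [Ctx.names] at hΔ
  | @lamu _ _ _ y _ _ M hy _ ih | @lam0 _ _ _ y _ _ M hy _ ih | @lam1 _ _ _ y _ _ M hy _ ih =>
    have hxy : x ≠ y := ne_of_mem_of_not_mem (by simp [hΩ]) hy
    exact fun hM => ih (by simp [hΩ]) (by simp [hxy, hΓ]) (by simp [hxy, hΔ])
      ((Tm.occursStrictly_open0_fvar hxy M).mpr hM)
  | appu _ _ ihM | app0 _ _ ihM => exact ihM hΩ hΓ hΔ
  | app1 _ _ _ ihM ihN =>
    simp only [Ctx.names_union, Finset.mem_union, not_or] at hΓ hΔ ihM ihN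
    exact not_or.mpr ⟨ihM hΩ ⟨hΓ, hΔ.2⟩ hΔ.1, ihN hΩ ⟨hΓ, hΔ.1⟩ hΔ.2⟩

end Typ

theorem exclusivity_general (Sg : ℕ → Option Ty)
    (Γ₁ Ω₁ Δ₁ Γ₂ Ω₂ Δ₂ : Ctx) (x : ℕ) (C : Ty) (M : Tm) (A : Ty)
    (h₂ : x ∉ Ctx.names (Γ₂ ∪ Ω₂ ∪ Δ₂)) :
    ¬ (Typ Sg Γ₁ Ω₁ (insert (x, C) Δ₁) M A ∧
       Typ Sg Γ₂ (insert (x, C) Ω₂) Δ₂ M A) := by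
  rintro ⟨hstrict, hirrel⟩
  simp only [Ctx.names_union, Finset.mem_union, not_or] at h₂
  obtain ⟨⟨hΓ₂, -⟩, hΔ₂⟩ := h₂
  exact hirrel.not_occursStrictly (by simp) hΓ₂ hΔ₂
    (hstrict.occursStrictly_of_mem_names (by simp))

/-- **Exclusivity.**  It is not the case that both
    `Γ₁; Ω₁; (Δ₁, x:C) ⊢ M : A` and `Γ₂; (Ω₂, x:C); Δ₂ ⊢ M : A` are
    derivable: no term can be typed both with `x` as a strict hypothesis and
    with `x` as an irrelevant hypothesis.  (The freshness hypotheses express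
    the standing convention that each context declares `x` at most once.) -/
theorem exclusivity (Sg : ℕ → Option Ty)
    (Γ₁ Ω₁ Δ₁ Γ₂ Ω₂ Δ₂ : Ctx) (x : ℕ) (C : Ty) (M : Tm) (A : Ty)
    (h₁ : x ∉ Ctx.names (Γ₁ ∪ Ω₁ ∪ Δ₁)) (h₂ : x ∉ Ctx.names (Γ₂ ∪ Ω₂ ∪ Δ₂)) :
    ¬ (Typ Sg Γ₁ Ω₁ (insert (x, C) Δ₁) M A ∧
       Typ Sg Γ₂ (insert (x, C) Ω₂) Δ₂ M A) :=
  exclusivity_general Sg Γ₁ Ω₁ Δ₁ Γ₂ Ω₂ Δ₂ x C M A h₂
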